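/- arXiv:1106.1271 — 5 statements merged into one kernel-verified Lean document; each statement's English description precedes it below -/
import Mathlib

section
/- For n > 1, the coefficient of x^1 in the n-th cyclotomic polynomial Φ_n(x) equals -μ(n), where μ is the Möbius function. -/
open Polynomial Finset

lemma prod_coeff_one_aux (S : Finset ℕ) (f : ℕ → ℤ[X]) (h : ∀ i ∈ S, (f i).coeff 0 = 1) :
    (∏ i ∈ S, f i).coeff 1 = ∑ i ∈ S, (f i).coeff 1 := by
  induction S using Finset.induction_on with
  | empty => simp [Polynomial.coeff_one]
  | @insert a s ha ih =>
    rw [Finset.prod_insert ha, Finset.sum_insert ha]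
    have hc0 : (∏ i ∈ s, f i).coeff 0 = 1 := by
      rw [Polynomial.coeff_zero_prod]
      exact Finset.prod_eq_one fun i hi => h i (Finset.mem_insert_of_mem hi)
    rw [Polynomial.coeff_mul, Finset.Nat.antidiagonal_succ]
    simp [hc0, Finset.sum_insert, Prod.map, h a (Finset.mem_insert_self a s),
      ih (fun i hi => h i (Finset.mem_insert_of_mem hi)), add_comm]

lemma moebius_sum_divisors {n : ℕ} (hn : 1 < n) :
    ∑ d ∈ n.divisors, (ArithmeticFunction.moebius d : ℤ) = 0 := by
  have := congrArg (fun f : ArithmeticFunction ℤ => f n) ArithmeticFunction.moebius_mul_coe_zeta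
  simp only [ArithmeticFunction.mul_apply, ArithmeticFunction.one_apply] at this
  rw [if_neg (by omega)] at this
  rw [Nat.sum_divisorsAntidiagonal
    (f := fun x y => (ArithmeticFunction.moebius x : ℤ) * ((ArithmeticFunction.zeta : ArithmeticFunction ℕ) : ArithmeticFunction ℤ) y)] at this
  rw [← this]
  apply Finset.sum_congr rfl
  intro d hd
  have hpos : 0 < n / d := Nat.div_pos (Nat.le_of_dvd (by omega) (Nat.mem_divisors.1 hd).1)
    (Nat.pos_of_mem_divisors hd)
  simp [ArithmeticFunction.natCoe_apply, ArithmeticFunction.zeta_apply, hpos.ne']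

theorem cyclotomic_coeff_one_eq_neg_moebius (n : ℕ) (hn : 1 < n) :
    (cyclotomic n ℤ).coeff 1 = -(ArithmeticFunction.moebius n) := by
  induction n using Nat.strong_induction_on with
  | _ n ih =>
  have hn0 : 0 < n := by omega
  set S : Finset ℕ := n.divisors.erase 1 with hS
  have h1mem : 1 ∈ n.divisors := Nat.one_mem_divisors.2 hn0.ne'
  have hins : insert 1 S = n.divisors := Finset.insert_erase h1mem
  have hprod := prod_cyclotomic_eq_X_pow_sub_one hn0 ℤ
  rw [← hins, Finset.prod_insert (Finset.notMem_erase 1 _), cyclotomic_one] at hprod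
  set Q : ℤ[X] := ∏ i ∈ S, cyclotomic i ℤ with hQ
  have hSgt : ∀ d ∈ S, 1 < d := by
    intro d hd
    have h1 : d ≠ 1 := Finset.ne_of_mem_erase hd
    have h2 : 0 < d := Nat.pos_of_mem_divisors (Finset.mem_of_mem_erase hd)
    omega
  have hQ0 : Q.coeff 0 = 1 := by
    rw [hQ, Polynomial.coeff_zero_prod]
    exact Finset.prod_eq_one fun d hd => cyclotomic_coeff_zero ℤ (hSgt d hd)
  have hcoeff : ((X - 1 : ℤ[X]) * Q).coeff 1 = Q.coeff 0 - Q.coeff 1 := by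
    rw [Polynomial.coeff_mul, Finset.Nat.antidiagonal_succ]
    simp [Prod.map, coeff_one]
    ring
  have hXn : ((X : ℤ[X]) ^ n - 1).coeff 1 = 0 := by
    rw [Polynomial.coeff_sub, Polynomial.coeff_X_pow, Polynomial.coeff_one]
    simp only [if_neg (by omega : ¬ 1 = n)]
    omega
  rw [hprod, hXn] at hcoeff
  have hQ1 : Q.coeff 1 = 1 := by omega
  have hsum : ∑ d ∈ S, (cyclotomic d ℤ).coeff 1 = 1 := by
    rw [← hQ1, hQ, prod_coeff_one_aux S _ (fun d hd => cyclotomic_coeff_zero ℤ (hSgt d hd))]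
  have hnS : n ∈ S := Finset.mem_erase.2 ⟨hn.ne', Nat.mem_divisors_self n hn0.ne'⟩
  rw [← Finset.insert_erase hnS, Finset.sum_insert (Finset.notMem_erase n _)] at hsum
  have hrest : ∑ d ∈ S.erase n, (cyclotomic d ℤ).coeff 1
      = ∑ d ∈ S.erase n, -(ArithmeticFunction.moebius d : ℤ) := by
    apply Finset.sum_congr rfl
    intro d hd
    have hd1 : 1 < d := hSgt d (Finset.mem_of_mem_erase hd)
    have hdlt : d < n := by
      have hdvd : d ∣ n := (Nat.mem_divisors.1 (Finset.mem_of_mem_erase (Finset.mem_of_mem_erase hd))).1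
      have := Nat.le_of_dvd hn0 hdvd
      have hne : d ≠ n := Finset.ne_of_mem_erase hd
      omega
    exact ih d hdlt hd1
  rw [hrest] at hsum
  have hmoeb := moebius_sum_divisors hn
  rw [← hins, Finset.sum_insert (Finset.notMem_erase 1 _)] at hmoeb
  rw [← hS] at hmoeb
  rw [← Finset.insert_erase hnS, Finset.sum_insert (Finset.notMem_erase n _)] at hmoeb
  simp only [ArithmeticFunction.moebius_apply_one] at hmoeb
  rw [Finset.sum_neg_distrib] at hsum
  omega
end

section
/- Let p < q be distinct primes and let r, s be nonnegative integers with rp + sq = (p-1)(q-1), 0 ≤ r ≤ q-2, 0 ≤ s ≤ p-2. Then x^{pq} · Φ_{pq}(x) = x^{pq}(∑_{i=0}^r x^{ip})(∑_{j=0}^s x^{jq}) - (∑_{i=r+1}^{q-1} x^{ip})(∑_{j=s+1}^{p-1} x^{jq}) as polynomials over ℤ. -/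
open Polynomial

theorem lam_leung_formula (p q : ℕ) (hp : p.Prime) (hq : q.Prime) (hpq : p < q)
    (r s : ℕ) (hr : r ≤ q - 2) (hs : s ≤ p - 2)
    (hrs : r * p + s * q = (p - 1) * (q - 1)) :
    X ^ (p * q) * cyclotomic (p * q) ℤ =
      X ^ (p * q) * ((∑ i ∈ Finset.range (r + 1), X ^ (i * p)) *
        (∑ j ∈ Finset.range (s + 1), X ^ (j * q))) -
      (∑ i ∈ Finset.Ico (r + 1) q, X ^ (i * p)) *
        (∑ j ∈ Finset.Ico (s + 1) p, X ^ (j * q)) := by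
  have hp2 := hp.two_le
  have hq2 := hq.two_le
  have key : cyclotomic (p*q) ℤ * ((X^p - 1) * (X^q - 1)) = (X^(p*q) - 1) * (X - 1) := by
    have hdiv : Nat.divisors (p*q) = {1, p, q, p*q} := by
      rw [Nat.divisors_mul, hp.divisors, hq.divisors]
      rw [Finset.insert_eq, Finset.insert_eq, Finset.union_mul, Finset.mul_union,
        Finset.mul_union, Finset.singleton_mul_singleton, Finset.singleton_mul_singleton,
        Finset.singleton_mul_singleton, Finset.singleton_mul_singleton]
      simp only [Finset.insert_eq, one_mul, mul_one, Finset.union_assoc]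
      rw [Finset.union_left_comm ({q} : Finset ℕ)]
    have h1 := prod_cyclotomic_eq_X_pow_sub_one (Nat.mul_pos hp.pos hq.pos) ℤ
    have hXp := prod_cyclotomic_eq_X_pow_sub_one hp.pos ℤ
    have hXq := prod_cyclotomic_eq_X_pow_sub_one hq.pos ℤ
    rw [hp.divisors] at hXp
    rw [hq.divisors] at hXq
    rw [hdiv] at h1
    have hne : p ≠ q := hpq.ne
    have h1p : (1:ℕ) ≠ p := fun h => hp.one_lt.ne' h.symm
    have h1q : (1:ℕ) ≠ q := fun h => hq.one_lt.ne' h.symm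
    have hppq : p ≠ p*q := by nlinarith
    have hqpq : q ≠ p*q := by nlinarith
    have h1pq : (1:ℕ) ≠ p*q := by nlinarith
    rw [Finset.prod_insert (by simp [h1p, h1q, h1pq]),
        Finset.prod_insert (by simp [hne, hppq]),
        Finset.prod_insert (by simp [hqpq]), Finset.prod_singleton] at h1
    rw [Finset.prod_insert (by simp [h1p]), Finset.prod_singleton] at hXp
    rw [Finset.prod_insert (by simp [h1q]), Finset.prod_singleton] at hXq
    rw [← hXp, ← hXq, ← h1, cyclotomic_one]
    ring
  have hXp : ((X:ℤ[X])^p - 1) ≠ 0 := by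
    simpa using (monic_X_pow_sub_C (1:ℤ) (by omega : p ≠ 0)).ne_zero
  have hXq : ((X:ℤ[X])^q - 1) ≠ 0 := by
    simpa using (monic_X_pow_sub_C (1:ℤ) (by omega : q ≠ 0)).ne_zero
  apply mul_right_cancel₀ (mul_ne_zero hXp hXq)
  have hsum : ∀ (t n : ℕ), (∑ i ∈ Finset.range n, (X:ℤ[X]) ^ (i * t)) * (X^t - 1)
      = X^(n*t) - 1 := by
    intro t n
    have := geom_sum_mul ((X:ℤ[X])^t) n
    rw [mul_comm n t, pow_mul]
    simpa [pow_mul, mul_comm] using this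
  have hsum2 : ∀ (t a b : ℕ), a ≤ b → (∑ i ∈ Finset.Ico a b, (X:ℤ[X]) ^ (i * t)) * (X^t - 1)
      = X^(b*t) - X^(a*t) := by
    intro t a b hab
    rw [Finset.sum_Ico_eq_sub _ hab, sub_mul, hsum, hsum]
    ring
  have hrq : r + 1 ≤ q := by omega
  have hsp : s + 1 ≤ p := by omega
  have e1 := hsum p (r+1)
  have e2 := hsum q (s+1)
  have e3 := hsum2 p (r+1) q hrq
  have e4 := hsum2 q (s+1) p hsp
  have hexp : (r+1) * p + (s+1) * q = p * q + 1 := by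
    obtain ⟨p', rfl⟩ : ∃ p', p = p' + 1 := ⟨p - 1, by omega⟩
    obtain ⟨q', rfl⟩ : ∃ q', q = q' + 1 := ⟨q - 1, by omega⟩
    simp only [Nat.add_sub_cancel] at hrs
    zify at hrs ⊢
    linear_combination hrs
  have hAB : (X:ℤ[X])^((r+1)*p) * (X:ℤ[X])^((s+1)*q) = X^(p*q) * X := by
    rw [← pow_add, ← pow_succ, hexp]
  have hqp : (X:ℤ[X])^(q*p) = X^(p*q) := by rw [mul_comm]
  have hpq' : (X:ℤ[X])^(p*q) = X^(p*q) := rfl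
  rw [mul_assoc, key]
  rw [mul_comm q p] at e3
  rw [mul_comm p q] at e4
  linear_combination (1 - (X:ℤ[X])^(p*q)) * hAB
    - ((X:ℤ[X])^(p*q) * ((∑ j ∈ Finset.Ico (s+1) p, (X:ℤ[X])^(j*q)) * 0 + (∑ j ∈ Finset.range (s+1), X^(j*q)) * (X^q - 1))) * e1
    - ((X:ℤ[X])^(p*q) * (X^((r+1)*p) - 1)) * e2
    + ((∑ j ∈ Finset.Ico (s+1) p, (X:ℤ[X])^(j*q)) * (X^q - 1)) * e3
    + ((X:ℤ[X])^(p*q) - X^((r+1)*p)) * e4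
end

section
/- Let p be an odd prime, n = 2p, and let f(x) = 1 + x^{k_l} + ... + x^{k_1} be a 0,1-polynomial with f(0)=1, at least three terms, all exponents in {1,...,n-1} distinct, n/2 ∉ {k_1,...,k_l}, and f(ζ_n) = 0 for ζ_n a primitive n-th root of unity. Then f(x) = ∑_{i=0}^{p-1} x^{2i}. -/
open Polynomial

theorem unique_three_term_2p (p : ℕ) (hp : p.Prime) (hodd : Odd p) (n : ℕ) (hn : n = 2 * p)
    (f : Polynomial ℤ) (hcoeff : ∀ i, f.coeff i = 0 ∨ f.coeff i = 1)
    (hconst : f.coeff 0 = 1) (hterms : 3 ≤ f.support.card)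
    (hdeg : f.natDegree < n) (hhalf : n / 2 ∉ f.support)
    (ζ : ℂ) (hζ : IsPrimitiveRoot ζ n) (hroot : Polynomial.aeval ζ f = 0) :
    f = ∑ i ∈ Finset.range p, X ^ (2 * i) := by
  subst hn
  haveI := Fact.mk hp
  have hp0 : 0 < p := hp.pos
  obtain ⟨t, hpt⟩ := hodd
  -- f.coeff p = 0
  have hfp : f.coeff p = 0 := by
    have h2 : 2 * p / 2 = p := by omega
    rw [h2] at hhalf
    by_contra h
    exact hhalf (Polynomial.mem_support_iff.2 h)
  set ω : ℂ := ζ ^ 2 with hωdef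
  have hω : IsPrimitiveRoot ω p := hζ.pow (by omega) (by ring)
  have hζp : ζ ^ p = -1 :=
    (hζ.pow (by omega) (by ring : 2 * p = p * 2)).eq_neg_one_of_two_right
  have hζ2p : ζ ^ (2 * p) = 1 := hζ.pow_eq_one
  have hpowmod : ∀ t : ℕ, ζ ^ t = ζ ^ (t % (2 * p)) := by
    intro s
    conv_lhs => rw [← Nat.div_add_mod s (2 * p)]
    rw [pow_add, pow_mul, hζ2p, one_pow, one_mul]
  set m : ℕ → ℕ := fun j => (2 * j + p) % (2 * p) with hmdef
  have hm : ∀ j, j < p → m j = if 2 * j < p then 2 * j + p else 2 * j - p := by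
    intro j hj
    by_cases h : 2 * j < p
    · rw [if_pos h]
      simp only [hmdef]
      exact Nat.mod_eq_of_lt (by omega)
    · rw [if_neg h]
      simp only [hmdef]
      rw [Nat.mod_eq_sub_mod (by omega)]
      have h3 : 2 * j + p - 2 * p = 2 * j - p := by omega
      rw [h3]
      exact Nat.mod_eq_of_lt (by omega)
  have hm0 : m 0 = p := by rw [hm 0 hp0]; simp [hp0]
  have hζm : ∀ j, ζ ^ (m j) = -(ω ^ j) := by
    intro j
    have h1 : ζ ^ (m j) = ζ ^ (2 * j + p) := (hpowmod (2 * j + p)).symm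
    rw [h1, pow_add, pow_mul, hζp, hωdef]
    ring
  set s₁ : Finset ℕ := (Finset.range p).image (fun j => 2 * j) with hs1
  set s₂ : Finset ℕ := (Finset.range p).image m with hs2
  have hminj : ∀ x ∈ Finset.range p, ∀ y ∈ Finset.range p, m x = m y → x = y := by
    intro x hx y hy hxy
    rw [Finset.mem_range] at hx hy
    rw [hm x hx, hm y hy] at hxy
    split_ifs at hxy <;> omega
  have h2inj : ∀ x ∈ Finset.range p, ∀ y ∈ Finset.range p, 2 * x = 2 * y → x = y := by
    intro x _ y _ h
    omega
  have hdisj : Disjoint s₁ s₂ := by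
    rw [Finset.disjoint_left]
    intro x hx1 hx2
    rw [hs1, Finset.mem_image] at hx1
    rw [hs2, Finset.mem_image] at hx2
    obtain ⟨j, hj, rfl⟩ := hx1
    obtain ⟨k, hk, hkx⟩ := hx2
    rw [Finset.mem_range] at hj hk
    rw [hm k hk] at hkx
    split_ifs at hkx <;> omega
  have hunion : s₁ ∪ s₂ = Finset.range (2 * p) := by
    apply Finset.eq_of_subset_of_card_le
    · intro x hx
      rw [Finset.mem_union] at hx
      rw [Finset.mem_range]
      rcases hx with hx | hx
      · rw [hs1, Finset.mem_image] at hx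
        obtain ⟨j, hj, rfl⟩ := hx
        rw [Finset.mem_range] at hj
        omega
      · rw [hs2, Finset.mem_image] at hx
        obtain ⟨j, hj, rfl⟩ := hx
        rw [Finset.mem_range] at hj
        rw [hm j hj]
        split_ifs <;> omega
    · rw [Finset.card_range, Finset.card_union_of_disjoint hdisj,
        Finset.card_image_of_injOn (fun x hx y hy h => h2inj x hx y hy h),
        Finset.card_image_of_injOn (fun x hx y hy h => hminj x hx y hy h),
        Finset.card_range]
      omega
  -- main sum identity
  have hsum : ∑ j ∈ Finset.range p,
      ((f.coeff (2 * j) - f.coeff (m j) : ℤ) : ℂ) * ω ^ j = 0 := by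
    have e1 : (Polynomial.aeval ζ f : ℂ)
        = ∑ i ∈ Finset.range (2 * p), (f.coeff i : ℂ) * ζ ^ i := by
      conv_lhs => rw [f.as_sum_range' (2 * p) hdeg]
      simp
    have e2 : ∑ i ∈ Finset.range (2 * p), (f.coeff i : ℂ) * ζ ^ i
        = ∑ j ∈ Finset.range p, (f.coeff (2 * j) : ℂ) * ζ ^ (2 * j)
          + ∑ j ∈ Finset.range p, (f.coeff (m j) : ℂ) * ζ ^ (m j) := by
      rw [← hunion, Finset.sum_union hdisj, hs1, hs2,
        Finset.sum_image h2inj, Finset.sum_image hminj]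
    have e3 : ∑ j ∈ Finset.range p, (f.coeff (2 * j) : ℂ) * ζ ^ (2 * j)
          + ∑ j ∈ Finset.range p, (f.coeff (m j) : ℂ) * ζ ^ (m j)
        = ∑ j ∈ Finset.range p,
            ((f.coeff (2 * j) - f.coeff (m j) : ℤ) : ℂ) * ω ^ j := by
      rw [← Finset.sum_add_distrib]
      refine Finset.sum_congr rfl fun j _ => ?_
      rw [hζm j, pow_mul]
      push_cast
      ring
    rw [← e3, ← e2, ← e1, hroot]
  -- the integer polynomial recording the relation
  set P : Polynomial ℤ :=
    ∑ j ∈ Finset.range p, Polynomial.monomial j (f.coeff (2 * j) - f.coeff (m j)) with hPdef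
  have hPcoeff : ∀ k, P.coeff k
      = if k < p then f.coeff (2 * k) - f.coeff (m k) else 0 := by
    intro k
    rw [hPdef, Polynomial.finset_sum_coeff]
    simp only [Polynomial.coeff_monomial, Finset.sum_ite_eq', Finset.mem_range]
  have hProot : Polynomial.aeval ω P = 0 := by
    calc Polynomial.aeval ω P
        = ∑ j ∈ Finset.range p,
            ((f.coeff (2 * j) - f.coeff (m j) : ℤ) : ℂ) * ω ^ j := by
          rw [hPdef, map_sum]
          exact Finset.sum_congr rfl fun j _ => by
            rw [Polynomial.aeval_monomial]; simp
      _ = 0 := hsum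
  have hPdeg : P.natDegree ≤ p - 1 := by
    rw [hPdef]
    refine Polynomial.natDegree_sum_le_of_forall_le _ _ fun j hj => ?_
    rw [Finset.mem_range] at hj
    exact le_trans (Polynomial.natDegree_monomial_le _) (by omega)
  have hdvd : Polynomial.cyclotomic p ℤ ∣ P := by
    rw [Polynomial.cyclotomic_eq_minpoly hω hp0]
    exact minpoly.isIntegrallyClosed_dvd (hω.isIntegral hp0) hProot
  obtain ⟨q, hq⟩ := hdvd
  have hP0 : P.coeff 0 = 1 := by
    rw [hPcoeff 0, if_pos hp0, hm0, hfp]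
    simpa using hconst
  have hq0 : q ≠ 0 := by
    rintro rfl
    rw [mul_zero] at hq
    rw [hq] at hP0
    simp at hP0
  have hcycdeg : (Polynomial.cyclotomic p ℤ).natDegree = p - 1 := by
    rw [Polynomial.natDegree_cyclotomic, Nat.totient_prime hp]
  have hqdeg : q.natDegree = 0 := by
    have h1 : P.natDegree = (p - 1) + q.natDegree := by
      rw [hq, Polynomial.natDegree_mul (Polynomial.cyclotomic_ne_zero p ℤ) hq0, hcycdeg]
    omega
  obtain ⟨c, hc⟩ : ∃ c : ℤ, q = Polynomial.C c :=
    ⟨q.coeff 0, (Polynomial.eq_C_of_natDegree_eq_zero hqdeg)⟩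
  have hPk : ∀ k, k < p → P.coeff k = c := by
    intro k hk
    rw [hq, hc, Polynomial.coeff_mul_C, Polynomial.cyclotomic_prime ℤ p,
      Polynomial.finset_sum_coeff]
    simp [Polynomial.coeff_X_pow, Finset.sum_ite_eq, Finset.sum_ite_eq',
      Finset.mem_range, hk]
  have hc1 : c = 1 := by
    rw [← hPk 0 hp0, hP0]
  -- conclude coefficient values
  have hvals : ∀ j, j < p → f.coeff (2 * j) = 1 ∧ f.coeff (m j) = 0 := by
    intro j hj
    have h1 := hPk j hj
    rw [hPcoeff j, if_pos hj, hc1] at h1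
    rcases hcoeff (2 * j) with h2 | h2 <;> rcases hcoeff (m j) with h3 | h3 <;>
      rw [h2, h3] at h1 <;> first | exact ⟨h2, h3⟩ | omega
  -- finish by comparing coefficients
  have hRHS : ∀ k, (∑ i ∈ Finset.range p, (X : Polynomial ℤ) ^ (2 * i)).coeff k
      = ∑ i ∈ Finset.range p, if k = 2 * i then 1 else 0 := by
    intro k
    rw [Polynomial.finset_sum_coeff]
    simp [Polynomial.coeff_X_pow]
  ext k
  rw [hRHS k]
  rcases Nat.lt_or_ge k (2 * p) with hk2p | hk2p
  · rcases Nat.even_or_odd k with ⟨j, hj⟩ | ⟨j, hj⟩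
    · -- k = 2*j even
      have hjp : j < p := by omega
      have hk2j : k = 2 * j := by omega
      have hone : ∑ i ∈ Finset.range p, (if 2 * j = 2 * i then (1 : ℤ) else 0) = 1 := by
        rw [Finset.sum_eq_single j (fun i _ hi => if_neg (by omega))
          (fun h => absurd (Finset.mem_range.2 hjp) h)]
        simp
      rw [hk2j, (hvals j hjp).1, hone]
    · -- k odd
      have hz : ∑ i ∈ Finset.range p, (if k = 2 * i then (1 : ℤ) else 0) = 0 :=
        Finset.sum_eq_zero fun i _ => if_neg (by omega)
      rw [hz]
      rcases Nat.lt_or_ge k p with hkp | hkp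
      · have hjp : (k + p) / 2 < p := by omega
        have hmk : m ((k + p) / 2) = k := by
          rw [hm _ hjp]
          split_ifs <;> omega
        rw [← hmk]
        exact (hvals _ hjp).2
      · have hjp : (k - p) / 2 < p := by omega
        have hmk : m ((k - p) / 2) = k := by
          rw [hm _ hjp]
          split_ifs <;> omega
        rw [← hmk]
        exact (hvals _ hjp).2
  · have hz : ∑ i ∈ Finset.range p, (if k = 2 * i then (1 : ℤ) else 0) = 0 :=
      Finset.sum_eq_zero fun i hi => if_neg (by
        simp only [Finset.mem_range] at hi; omega)
    rw [hz]
    exact Polynomial.coeff_eq_zero_of_natDegree_lt (lt_of_lt_of_le hdeg hk2p)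
end

section
/- Let n be an even positive integer and ζ_n a primitive n-th root of unity. Let f be a 0,1-polynomial with f(0) = 1, at least three terms, deg f < n/2 + φ(n), n/2 not an exponent of f, and f(ζ_n) = 0. Then there exists an exponent s of f with φ(n) ≤ s < n/2. -/
/-!
Suppose no exponent of `f` lies in `[φ(n), n/2)` and write `f = r + X^(n/2) q` with
`deg r < n/2`. Since `ζ^(n/2) = -1`, the polynomial `r - q` vanishes at `ζ`. The exponents of `r`
avoid `[φ(n), n/2)` and `deg q = deg f - n/2 < φ(n)`, so `deg (r - q) < φ(n)`; and its constant
term is `1` because `n/2` is not an exponent. This contradicts the fact that the cyclotomic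
polynomial, of degree `φ(n)`, is the minimal polynomial of `ζ` over `ℤ`.
-/

open Polynomial

namespace Polynomial

variable {R : Type*} [CommRing R] (f : R[X]) (m : ℕ)

theorem coeff_modByMonic_X_pow (i : ℕ) :
    (f %ₘ X ^ m).coeff i = if i < m then f.coeff i else 0 := by
  nontriviality R
  have hr : (f %ₘ X ^ m).degree < m := by
    simpa using degree_modByMonic_lt f (monic_X_pow m)
  conv_rhs => rw [← modByMonic_add_div f (X ^ m)]
  split_ifs with hi
  · simp [coeff_X_pow_mul', Nat.not_le.mpr hi]
  · exact coeff_eq_zero_of_degree_lt (hr.trans_le (by exact_mod_cast Nat.not_lt.mp hi))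

theorem coeff_divByMonic_X_pow (i : ℕ) : (f /ₘ X ^ m).coeff i = f.coeff (i + m) := by
  conv_rhs => rw [← modByMonic_add_div f (X ^ m)]
  simp [coeff_modByMonic_X_pow, coeff_X_pow_mul']

theorem aeval_modByMonic_X_pow_add {A : Type*} [CommRing A] [Algebra R A] (x : A) :
    aeval x (f %ₘ X ^ m) + x ^ m * aeval x (f /ₘ X ^ m) = aeval x f := by
  conv_rhs => rw [← modByMonic_add_div f (X ^ m)]
  simp

variable {f m} in
theorem natDegree_modByMonic_X_pow_sub_divByMonic_lt {a : ℕ} (ha : 0 < a)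
    (hgap : ∀ i, a ≤ i → i < m → f.coeff i = 0) (hdeg : f.natDegree < m + a) :
    (f %ₘ X ^ m - f /ₘ X ^ m).natDegree < a := by
  refine (Nat.le_sub_one_iff_lt ha).mp <| natDegree_le_iff_coeff_eq_zero.mpr fun i hi ↦ ?_
  have hhigh : f.coeff (i + m) = 0 := coeff_eq_zero_of_natDegree_lt (by omega)
  rw [coeff_sub, coeff_modByMonic_X_pow, coeff_divByMonic_X_pow, hhigh, sub_zero]
  split_ifs with him
  exacts [hgap i (by omega) him, rfl]

end Polynomial

namespace IsPrimitiveRoot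

theorem pow_div_two_eq_neg_one {R : Type*} [CommRing R] [IsDomain R] {ζ : R} {n : ℕ}
    (hζ : IsPrimitiveRoot ζ n) (hn : 0 < n) (heven : Even n) : ζ ^ (n / 2) = -1 := by
  obtain ⟨k, rfl⟩ := heven.two_dvd
  have hk : 0 < k := by omega
  refine eq_neg_one_of_two_right ?_
  convert hζ.pow_of_dvd (p := k) hk.ne' (Dvd.intro_left 2 (by ring)) using 1
  · rw [Nat.mul_div_cancel_left k two_pos]
  · exact (Nat.mul_div_left 2 hk).symm

theorem totient_le_natDegree_of_aeval_eq_zero {K : Type*} [Field K] [CharZero K] {ζ : K}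
    {n : ℕ} (hζ : IsPrimitiveRoot ζ n) (hn : 0 < n) {p : ℤ[X]} (hp : p ≠ 0)
    (hroot : aeval ζ p = 0) : n.totient ≤ p.natDegree := by
  have hdvd : cyclotomic n ℤ ∣ p := by
    rw [cyclotomic_eq_minpoly hζ hn]
    exact minpoly.isIntegrallyClosed_dvd (hζ.isIntegral hn) hroot
  simpa [natDegree_cyclotomic] using natDegree_le_of_dvd hdvd hp

end IsPrimitiveRoot

theorem exists_middle_exponent_general (n : ℕ) (hn : 0 < n) (heven : Even n)
    (f : Polynomial ℤ) (hconst : f.coeff 0 = 1)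
    (hdeg : f.natDegree < n / 2 + Nat.totient n) (hhalf : n / 2 ∉ f.support)
    (ζ : ℂ) (hζ : IsPrimitiveRoot ζ n) (hroot : Polynomial.aeval ζ f = 0) :
    ∃ s ∈ f.support, Nat.totient n ≤ s ∧ s < n / 2 := by
  by_contra! hgap
  set m := n / 2
  set p := f %ₘ X ^ m - f /ₘ X ^ m
  have hp0 : p.coeff 0 = 1 := by
    have hm : 0 < m := by obtain ⟨k, hk⟩ := heven; omega
    simpa [p, coeff_modByMonic_X_pow, coeff_divByMonic_X_pow, hm, hconst] using hhalf
  have hproot : aeval ζ p = 0 := by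
    have hsplit := aeval_modByMonic_X_pow_add f m ζ
    rw [hζ.pow_div_two_eq_neg_one hn heven, hroot] at hsplit
    simp only [p, map_sub]
    linear_combination hsplit
  have hpdeg : p.natDegree < n.totient := by
    refine natDegree_modByMonic_X_pow_sub_divByMonic_lt (Nat.totient_pos.mpr hn) ?_ (by omega)
    intro i hi him
    by_contra hne
    exact (hgap i (mem_support_iff.mpr hne) hi).not_gt him
  have hp : p ≠ 0 := fun h ↦ by simp [h] at hp0
  exact hpdeg.not_ge (hζ.totient_le_natDegree_of_aeval_eq_zero hn hp hproot)

theorem exists_middle_exponent (n : ℕ) (hn : 0 < n) (heven : Even n)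
    (f : Polynomial ℤ) (hcoeff : ∀ i, f.coeff i = 0 ∨ f.coeff i = 1)
    (hconst : f.coeff 0 = 1) (hterms : 3 ≤ f.support.card)
    (hdeg : f.natDegree < n / 2 + Nat.totient n) (hhalf : n / 2 ∉ f.support)
    (ζ : ℂ) (hζ : IsPrimitiveRoot ζ n) (hroot : Polynomial.aeval ζ f = 0) :
    ∃ s ∈ f.support, Nat.totient n ≤ s ∧ s < n / 2 :=
  exists_middle_exponent_general n hn heven f hconst hdeg hhalf ζ hζ hroot
end

section
/- Let p < q be odd primes and n = 2pq. Write Φ_n(x) = f₁(x) - f₂(x) with f₁, f₂ having nonnegative coefficients and disjoint supports, and set Φ_n^T(x) = f₁(x) + x^{n/2} f₂(x). Then deg(Φ_n^T) = n/2 + φ(n) - p = n - 2p - q + 1. -/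
open Polynomial

private lemma lcAux (u : Polynomial ℤ) (m k : ℕ) (h : k < m) :
    (u * ((X:Polynomial ℤ)^m - 1)).coeff k = -u.coeff k := by
  have h1 : u * ((X:Polynomial ℤ)^m - 1) = u * X^m - u := by ring
  rw [h1, coeff_sub, coeff_mul_X_pow', if_neg (by omega), zero_sub]

private lemma revXpow (m : ℕ) : ((X:Polynomial ℤ)^m - 1).reverse = 1 - X^m := by
  have hnd : ((X:Polynomial ℤ)^m - 1).natDegree = m := by
    rw [show (1:Polynomial ℤ) = C 1 from (map_one C).symm, natDegree_X_pow_sub_C]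
  show reflect (((X:Polynomial ℤ)^m - 1).natDegree) ((X:Polynomial ℤ)^m - 1) = 1 - X^m
  rw [hnd, show ((X:Polynomial ℤ)^m - 1) = X^m - C 1 from by rw [map_one],
    reflect_sub, reflect_monomial, reflect_C, revAt_le (le_refl m), Nat.sub_self,
    pow_zero, map_one, one_mul]

private lemma revXone : ((X:Polynomial ℤ) - 1).reverse = 1 - X := by
  have := revXpow 1
  simpa using this

private lemma XpowSubOneNe (m : ℕ) (hm : 0 < m) : ((X:Polynomial ℤ)^m - 1) ≠ 0 := by
  intro h
  have h2 : ((X:Polynomial ℤ)^m - 1).coeff m = 1 := by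
    rw [coeff_sub, coeff_X_pow, if_pos rfl, coeff_one, if_neg hm.ne']
    norm_num
  rw [h, coeff_zero] at h2
  exact absurd h2 (by norm_num)

private lemma XSubOneNe : ((X:Polynomial ℤ) - 1) ≠ 0 := by
  intro h
  have := congrArg (fun f => Polynomial.coeff f 1) h
  simp only [coeff_sub, coeff_X_one, coeff_one, coeff_zero] at this
  omega

/-- The key product identity for `Φ_{2pq}` coming from Möbius inversion. -/
private lemma cycE (p q : ℕ) (hp : p.Prime) (hq : q.Prime)
    (hpodd : Odd p) (hqodd : Odd q) (hpq : p < q) :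
    (cyclotomic (2*p*q) ℤ * (((X:Polynomial ℤ)^(2*p)-1)*(X-1))) * (X^(p*q)-1) * (X^(2*q)-1)
      = (((X:Polynomial ℤ)^p-1)*(X^2-1)) * (X^(2*p*q)-1) * (X^q-1) := by
  haveI : Fact q.Prime := ⟨hq⟩
  have hpdvdq : ¬ p ∣ q := fun h =>
    hpq.ne ((Nat.prime_dvd_prime_iff_eq hp hq).mp h)
  have h2q : ¬ (2 ∣ q) := by
    obtain ⟨b, hb⟩ := hqodd; omega
  have h2pq : ¬ (2 ∣ p * q) := by
    have hodd : Odd (p * q) := hpodd.mul hqodd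
    rw [Nat.odd_iff] at hodd
    omega
  have e1 : cyclotomic q ℤ * ((X:Polynomial ℤ) - 1) = X^q - 1 :=
    cyclotomic_prime_mul_X_sub_one ℤ q
  have e2 : cyclotomic (p*q) ℤ * cyclotomic q ℤ * ((X:Polynomial ℤ)^p - 1) = X^(p*q) - 1 := by
    have h := congrArg (expand ℤ p) e1
    simp only [map_mul, map_sub, map_one, map_pow, expand_X,
      cyclotomic_expand_eq_cyclotomic_mul hp hpdvdq] at h
    rw [← pow_mul, mul_comm q p] at h
    exact h
  have e2' : cyclotomic (2*q) ℤ * cyclotomic q ℤ * ((X:Polynomial ℤ)^2 - 1) = X^(2*q) - 1 := by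
    have h := congrArg (expand ℤ 2) e1
    simp only [map_mul, map_sub, map_one, map_pow, expand_X,
      cyclotomic_expand_eq_cyclotomic_mul Nat.prime_two h2q] at h
    rw [← pow_mul, mul_comm q 2] at h
    exact h
  have e4 := congrArg (expand ℤ 2) e2
  simp only [map_mul, map_sub, map_one, map_pow, expand_X,
    cyclotomic_expand_eq_cyclotomic_mul Nat.prime_two h2q,
    cyclotomic_expand_eq_cyclotomic_mul Nat.prime_two h2pq] at e4
  rw [← pow_mul, ← pow_mul, mul_comm (p*q) 2, mul_comm q 2,
    show 2*(p*q) = 2*p*q from (mul_assoc 2 p q).symm] at e4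
  rw [← e2, ← e2', ← e4, ← e1]
  ring

/-- Low-order coefficients of `Φ_{2pq}`. -/
private lemma cyc2pq_coeff (p q : ℕ) (hp : p.Prime) (hq : q.Prime)
    (hpodd : Odd p) (hqodd : Odd q) (hpq : p < q) :
    ∀ k, k < q → (cyclotomic (2*p*q) ℤ).coeff k =
      if k % (2*p) = 0 ∨ k % (2*p) = 1 then 1
      else if k % (2*p) = p ∨ k % (2*p) = p+1 then -1 else 0 := by
  have hp3 : 3 ≤ p := by
    obtain ⟨a, ha⟩ := hpodd; have := hp.two_le; omega
  have hE := cycE p q hp hq hpodd hqodd hpq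
  set Φ := cyclotomic (2*p*q) ℤ with hΦ
  set C : Polynomial ℤ := Φ * (X - 1) with hC
  have hqpq : q ≤ p*q := Nat.le_mul_of_pos_left q hp.pos
  have hq2pq : q ≤ 2*p*q := Nat.le_mul_of_pos_left q (by omega : 0 < 2*p)
  -- the recurrence for C
  have hrecC : ∀ k, k < q → C.coeff k =
      (if 2*p ≤ k then C.coeff (k - 2*p) else 0)
        - (((X:Polynomial ℤ)^p - 1)*(X^2-1)).coeff k := by
    intro k hk
    have h1 : ((Φ * (((X:Polynomial ℤ)^(2*p)-1)*(X-1))) * (X^(p*q)-1) * (X^(2*q)-1)).coeff k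
        = ((((X:Polynomial ℤ)^p-1)*(X^2-1)) * (X^(2*p*q)-1) * (X^q-1)).coeff k := by
      rw [hE]
    rw [lcAux _ (2*q) k (by omega), lcAux _ (p*q) k (lt_of_lt_of_le hk hqpq),
      lcAux _ q k hk, lcAux _ (2*p*q) k (lt_of_lt_of_le hk hq2pq),
      neg_inj, neg_inj] at h1
    have h2 : Φ * (((X:Polynomial ℤ)^(2*p)-1)*(X-1)) = C * X^(2*p) - C := by
      rw [hC]; ring
    rw [h2, coeff_sub, coeff_mul_X_pow'] at h1
    linarith
  have hW : ∀ j:ℕ, (((X:Polynomial ℤ)^p - 1)*(X^2-1)).coeff j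
      = (if j = p+2 then 1 else 0) - (if j = p then 1 else 0)
        - (if j = 2 then 1 else 0) + (if j = 0 then 1 else 0) := by
    intro j
    have he : ((X:Polynomial ℤ)^p - 1)*(X^2-1) = X^(p+2) - X^p - X^2 + 1 := by ring
    rw [he, coeff_add, coeff_sub, coeff_sub, coeff_X_pow, coeff_X_pow, coeff_X_pow, coeff_one]
  -- closed form for C
  have hCval : ∀ k, k < q → C.coeff k =
      (if k % (2*p) = 2 ∨ k % (2*p) = p then 1
        else if k % (2*p) = 0 ∨ k % (2*p) = p+2 then -1 else 0) := by
    intro k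
    induction k using Nat.strong_induction_on with
    | _ k ih =>
      intro hk
      rw [hrecC k hk, hW k]
      by_cases h2p : 2*p ≤ k
      · rw [if_pos h2p, ih (k - 2*p) (by omega) (by omega)]
        have hmod : (k - 2*p) % (2*p) = k % (2*p) := (Nat.mod_eq_sub_mod h2p).symm
        rw [hmod]
        set r := k % (2*p) with hr
        split_ifs <;> first
      | omega
      | (simp only [false_or, or_false, true_or, or_true, not_or] at *; omega)
      · rw [if_neg h2p, Nat.mod_eq_of_lt (by omega : k < 2*p)]
        split_ifs <;> first
      | omega
      | (simp only [false_or, or_false, true_or, or_true, not_or] at *; omega)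
  -- recurrence for Φ
  have h3 : ∀ k : ℕ, C.coeff k = (if 1 ≤ k then Φ.coeff (k-1) else 0) - Φ.coeff k := by
    intro k
    have h2 : C = Φ * X^1 - Φ := by rw [hC]; ring
    rw [h2, coeff_sub, coeff_mul_X_pow']
  intro k
  induction k with
  | zero =>
    intro hk
    have hstep : Φ.coeff 0 = - C.coeff 0 := by
      have h0 := h3 0
      rw [if_neg (by omega : ¬ 1 ≤ 0)] at h0
      linarith
    rw [hstep, hCval 0 hk]
    simp only [Nat.zero_mod]
    split_ifs <;> first
      | omega
      | (simp only [false_or, or_false, true_or, or_true, not_or] at *; omega)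
  | succ k ihk =>
    intro hk
    have hstep : Φ.coeff (k+1) = Φ.coeff k - C.coeff (k+1) := by
      have h0 := h3 (k+1)
      rw [if_pos (by omega : 1 ≤ k+1), Nat.add_sub_cancel] at h0
      linarith
    have hmlt : k % (2*p) < 2*p := Nat.mod_lt _ (by omega)
    have hs : (k+1) % (2*p) = if k % (2*p) + 1 = 2*p then 0 else k % (2*p) + 1 := by
      rw [Nat.add_mod, Nat.mod_eq_of_lt (show 1 < 2*p by omega)]
      split_ifs with h
      · rw [h, Nat.mod_self]
      · exact Nat.mod_eq_of_lt (by omega)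
    rw [hstep, ihk (by omega), hCval (k+1) hk, hs]
    set r := k % (2*p) with hr
    split_ifs <;> first
      | omega
      | (simp only [false_or, or_false, true_or, or_true, not_or] at *; omega)

/-- `Φ_{2pq}` is palindromic. -/
private lemma cyc2pq_reverse (p q : ℕ) (hp : p.Prime) (hq : q.Prime)
    (hpodd : Odd p) (hqodd : Odd q) (hpq : p < q) :
    (cyclotomic (2*p*q) ℤ).reverse = cyclotomic (2*p*q) ℤ := by
  have hE := cycE p q hp hq hpodd hqodd hpq
  have hrev := congrArg Polynomial.reverse hE
  simp only [reverse_mul_of_domain, revXpow, revXone] at hrev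
  have hppos := hp.pos
  have hqpos := hq.pos
  have hM : ((((X:Polynomial ℤ)^(2*p)-1)*(X-1)) * ((X^(p*q)-1) * (X^(2*q)-1))) ≠ 0 :=
    mul_ne_zero (mul_ne_zero (XpowSubOneNe (2*p) (by omega)) XSubOneNe)
      (mul_ne_zero (XpowSubOneNe (p*q) (Nat.mul_pos hppos hqpos))
        (XpowSubOneNe (2*q) (by omega)))
  refine mul_right_cancel₀ hM ?_
  linear_combination hrev - hE

theorem degree_transform_2pq (p q : ℕ) (hp : p.Prime) (hq : q.Prime)
    (hpodd : Odd p) (hqodd : Odd q) (hpq : p < q) (n : ℕ) (hn : n = 2 * p * q)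
    (f₁ f₂ : Polynomial ℤ)
    (h₁ : ∀ i, 0 ≤ f₁.coeff i) (h₂ : ∀ i, 0 ≤ f₂.coeff i)
    (hdisj : Disjoint f₁.support f₂.support)
    (hsplit : cyclotomic n ℤ = f₁ - f₂) :
    (f₁ + X ^ (n / 2) * f₂).natDegree = n / 2 + Nat.totient n - p ∧
    (f₁ + X ^ (n / 2) * f₂).natDegree = n - 2 * p - q + 1 := by
  subst hn
  have hp3 : 3 ≤ p := by obtain ⟨a, ha⟩ := hpodd; have := hp.two_le; omega
  have hq5 : 5 ≤ q := by obtain ⟨b, hb⟩ := hqodd; omega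
  have hqp2 : p + 2 ≤ q := by
    obtain ⟨a, ha⟩ := hpodd; obtain ⟨b, hb⟩ := hqodd; omega
  have hkey := cyc2pq_coeff p q hp hq hpodd hqodd hpq
  have hrev := cyc2pq_reverse p q hp hq hpodd hqodd hpq
  set Φ := cyclotomic (2*p*q) ℤ with hΦdef
  have hcop2p : Nat.Coprime 2 p := (Nat.coprime_primes Nat.prime_two hp).mpr (by omega)
  have hcop2q : Nat.Coprime 2 q := (Nat.coprime_primes Nat.prime_two hq).mpr (by omega)
  have hcoppq : Nat.Coprime p q := (Nat.coprime_primes hp hq).mpr (by omega)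
  have htot : Nat.totient (2*p*q) = (p-1)*(q-1) := by
    rw [Nat.totient_mul (Nat.Coprime.mul hcop2q hcoppq), Nat.totient_mul hcop2p,
      Nat.totient_two, Nat.totient_prime hp, Nat.totient_prime hq, one_mul]
  have hnd : Φ.natDegree = (p-1)*(q-1) := by
    rw [hΦdef, natDegree_cyclotomic, htot]
  obtain ⟨t, ht⟩ : ∃ t, t = (p-1)*(q-1) := ⟨_, rfl⟩
  rw [← ht] at htot hnd
  have hppq : p ≤ t := by
    rw [ht]
    calc p ≤ (p-1)*2 := by omega
    _ ≤ (p-1)*(q-1) := Nat.mul_le_mul_left _ (by omega)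
  have hpal : ∀ m, m ≤ t → Φ.coeff (t - m) = Φ.coeff m := by
    intro m hm
    conv_rhs => rw [← hrev]
    rw [coeff_reverse, hnd, revAt_le hm]
  have hneg : Φ.coeff (t - p) = -1 := by
    rw [hpal p hppq, hkey p hpq, Nat.mod_eq_of_lt (show p < 2*p by omega)]
    split_ifs <;> first
      | omega
      | (simp only [false_or, or_false, true_or, or_true, not_or] at *; omega)
  have hnonneg : ∀ k, t - p < k → 0 ≤ Φ.coeff k := by
    intro k hk
    by_cases hkle : k ≤ t
    · have h1 := hpal (t - k) (by omega)
      rw [show t - (t-k) = k from by omega] at h1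
      rw [h1, hkey (t - k) (by omega), Nat.mod_eq_of_lt (by omega : t - k < 2*p)]
      split_ifs <;> first
      | omega
      | (simp only [false_or, or_false, true_or, or_true, not_or] at *; omega)
    · rw [coeff_eq_zero_of_natDegree_lt (show Φ.natDegree < k by rw [hnd]; omega)]
  have hcoeff : ∀ k, Φ.coeff k = f₁.coeff k - f₂.coeff k := by
    intro k; rw [hsplit, coeff_sub]
  have hdisj' : ∀ k, f₁.coeff k = 0 ∨ f₂.coeff k = 0 := by
    intro k; by_contra h; push_neg at h
    exact (Finset.disjoint_left.mp hdisj (mem_support_iff.mpr h.1)) (mem_support_iff.mpr h.2)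
  have hf2top : f₂.coeff (t - p) ≠ 0 := by
    have h := hcoeff (t - p)
    rw [hneg] at h
    intro h0
    rw [h0, sub_zero] at h
    have := h₁ (t - p); omega
  have hf2hi : ∀ k, t - p < k → f₂.coeff k = 0 := by
    intro k hk
    rcases hdisj' k with h | h
    · have hc := hcoeff k
      rw [h, zero_sub] at hc
      have h0 := hnonneg k hk
      have h2 := h₂ k
      omega
    · exact h
  have hf2deg : f₂.natDegree = t - p :=
    le_antisymm (natDegree_le_iff_coeff_eq_zero.mpr hf2hi) (le_natDegree_of_ne_zero hf2top)
  have hf1deg : f₁.natDegree ≤ t := by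
    refine natDegree_le_iff_coeff_eq_zero.mpr (fun k hk => ?_)
    have hc := hcoeff k
    rw [coeff_eq_zero_of_natDegree_lt (show Φ.natDegree < k by rw [hnd]; omega)] at hc
    rcases hdisj' k with h | h
    · exact h
    · rw [h] at hc; omega
  have hf2ne : f₂ ≠ 0 := fun h => hf2top (by rw [h]; simp)
  have hhalf : 2*p*q/2 = p*q := by
    rw [mul_assoc, Nat.mul_div_cancel_left _ (by norm_num : 0 < 2)]
  have hpltpq : p < p*q :=
    lt_of_lt_of_le (show p < p*2 by omega) (Nat.mul_le_mul_left p (by omega))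
  have hXf2 : ((X:Polynomial ℤ)^(p*q) * f₂).natDegree = p*q + (t - p) := by
    rw [natDegree_mul (pow_ne_zero _ X_ne_zero) hf2ne, natDegree_X_pow, hf2deg]
  have hkey2 : ∀ m : ℕ, p < m → t < m + (t - p) := fun m hm => by omega
  have hlt : f₁.natDegree < ((X:Polynomial ℤ)^(p*q) * f₂).natDegree := by
    rw [hXf2]
    exact lt_of_le_of_lt hf1deg (hkey2 _ hpltpq)
  have hmain : (f₁ + (X:Polynomial ℤ)^(p*q) * f₂).natDegree = p*q + (t - p) := by
    rw [natDegree_add_eq_right_of_natDegree_lt hlt, hXf2]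
  have hT : t + p + q = p*q + 1 := by
    rw [ht]
    obtain ⟨a, ha⟩ : ∃ a, p = a + 1 := ⟨p-1, by omega⟩
    obtain ⟨b, hb⟩ : ∃ b, q = b + 1 := ⟨q-1, by omega⟩
    subst ha hb
    simp only [Nat.add_sub_cancel]
    ring
  have h2m : 2*p*q = 2*(p*q) := mul_assoc 2 p q
  rw [hhalf, htot]
  constructor
  · rw [hmain]; omega
  · rw [hmain, h2m]; omega
end
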